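/- A covector on ℝ⁴ is of alignment type III (can be brought to a form with only its boost-weight −1 component nonzero) if and only if it is null: for v : Fin 4 → ℝ, there exists an η-orthogonal matrix Λ such that the components of Λ·v with indices 1, 3, 4 all vanish (only the index-2 component, of boost weight −1, may be nonzero) if and only if Σ_{a,b} η^{ab} v_a v_b = 0. -/

import Mathlib

open Matrix

/-- The null-frame Minkowski metric on `ℝ⁴` as a matrix (indices 0,1,2,3 for 1,2,3,4). -/
noncomputable def etaM : Matrix (Fin 4) (Fin 4) ℝ :=
  Matrix.of fun a b =>
    if (a = 0 ∧ b = 1) ∨ (a = 1 ∧ b = 0) then -1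
    else if (a = 2 ∧ b = 2) ∨ (a = 3 ∧ b = 3) then 1 else 0

/-- Action of a frame-transformation matrix on a covector: `(Λ·v)_a = Σ_b Λ_{ba} v_b`. -/
noncomputable def actCo (Λ : Matrix (Fin 4) (Fin 4) ℝ) (v : Fin 4 → ℝ) : Fin 4 → ℝ :=
  fun a => ∑ b, Λ b a * v b

/-!
An `η`-orthogonal transformation preserves `η(v, v) = -2 v₁ v₂ + v₃² + v₄²`, which vanishes when
only `v₂` is nonzero. Conversely, let `v` be null. If `v₁ = 0` then `v₃² + v₄² = 0`, so `v` is
already of type III. Otherwise a null rotation with parameters `zᵢ = -vᵢ / v₁` (`i = 3, 4`),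
followed by the interchange of the two null frame vectors, moves `v₁` to the boost-weight `-1`
slot and kills `v₃` and `v₄`; the remaining component then vanishes because `v` is null.
-/

namespace Matrix

variable {n R : Type*} [Fintype n] [CommRing R]

theorem mul_inv_mul_transpose_eq_of_transpose_mul_mul_eq [DecidableEq n] {η Λ : Matrix n n R}
    (hη : IsUnit η.det) (h : Λᵀ * η * Λ = η) : Λ * η⁻¹ * Λᵀ = η⁻¹ := by
  have hleft : (η⁻¹ * Λᵀ * η) * Λ = 1 := by
    rw [Matrix.mul_assoc, Matrix.mul_assoc, ← Matrix.mul_assoc Λᵀ, h, nonsing_inv_mul η hη]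
  have hright : Λ * (η⁻¹ * Λᵀ * η) = 1 := mul_eq_one_comm.mp hleft
  calc Λ * η⁻¹ * Λᵀ = Λ * (η⁻¹ * Λᵀ * η) * η⁻¹ := by
        simp only [Matrix.mul_assoc, mul_nonsing_inv η hη, Matrix.mul_one]
    _ = η⁻¹ := by rw [hright, Matrix.one_mul]

theorem sum_sum_mul_mul_eq_vecMul_dotProduct (M : Matrix n n R) (w : n → R) :
    ∑ a, ∑ b, M a b * w a * w b = (w ᵥ* M) ⬝ᵥ w := by
  simp only [dotProduct, vecMul, Finset.sum_mul]
  rw [Finset.sum_comm]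
  exact Finset.sum_congr rfl fun a _ => Finset.sum_congr rfl fun b _ => by ring

theorem vecMul_vecMul_dotProduct_vecMul_of_mul_mul_transpose_eq {η Λ : Matrix n n R}
    (h : Λ * η * Λᵀ = η) (v : n → R) :
    (v ᵥ* Λ ᵥ* η) ⬝ᵥ (v ᵥ* Λ) = (v ᵥ* η) ⬝ᵥ v := by
  rw [vecMul_vecMul, ← mulVec_transpose Λ v, dotProduct_mulVec, vecMul_vecMul, h]

end Matrix

theorem etaM_mul_self : etaM * etaM = 1 := by
  ext a b
  fin_cases a <;> fin_cases b <;> simp [etaM, mul_apply, one_apply]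

theorem etaM_inv : etaM⁻¹ = etaM :=
  inv_eq_left_inv etaM_mul_self

theorem isUnit_det_etaM : IsUnit etaM.det :=
  isUnit_det_of_left_inverse etaM_mul_self

theorem actCo_eq_vecMul (Λ : Matrix (Fin 4) (Fin 4) ℝ) (v : Fin 4 → ℝ) :
    actCo Λ v = v ᵥ* Λ := by
  funext a
  simp [actCo, vecMul, dotProduct, mul_comm]

theorem etaM_quadratic_eq (w : Fin 4 → ℝ) :
    ∑ a, ∑ b, etaM a b * w a * w b = -2 * w 0 * w 1 + w 2 ^ 2 + w 3 ^ 2 := by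
  simp [etaM, Fin.sum_univ_four]
  ring

theorem etaM_quadratic_actCo {Λ : Matrix (Fin 4) (Fin 4) ℝ} (hΛ : Λᵀ * etaM * Λ = etaM)
    (v : Fin 4 → ℝ) :
    ∑ a, ∑ b, etaM a b * actCo Λ v a * actCo Λ v b = ∑ a, ∑ b, etaM a b * v a * v b := by
  have hΛ' : Λ * etaM * Λᵀ = etaM := by
    simpa only [etaM_inv] using mul_inv_mul_transpose_eq_of_transpose_mul_mul_eq isUnit_det_etaM hΛ
  simp only [sum_sum_mul_mul_eq_vecMul_dotProduct, actCo_eq_vecMul,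
    vecMul_vecMul_dotProduct_vecMul_of_mul_mul_transpose_eq hΛ']

/-- `N * P`, where `N` is the null rotation with parameters `z₃, z₄` fixing the first null frame
vector and `P` interchanges the two null frame vectors. -/
noncomputable def nullRotationSwap (z₃ z₄ : ℝ) : Matrix (Fin 4) (Fin 4) ℝ :=
  !![(z₃ ^ 2 + z₄ ^ 2) / 2, 1, z₃, z₄;
     1, 0, 0, 0;
     z₃, 0, 1, 0;
     z₄, 0, 0, 1]

theorem nullRotationSwap_transpose_mul_etaM_mul (z₃ z₄ : ℝ) :
    (nullRotationSwap z₃ z₄)ᵀ * etaM * nullRotationSwap z₃ z₄ = etaM := by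
  ext a b
  fin_cases a <;> fin_cases b <;> simp [nullRotationSwap, etaM, mul_apply, Fin.sum_univ_four]
  ring

theorem actCo_nullRotationSwap (z₃ z₄ : ℝ) (v : Fin 4 → ℝ) :
    actCo (nullRotationSwap z₃ z₄) v =
      ![(z₃ ^ 2 + z₄ ^ 2) / 2 * v 0 + v 1 + z₃ * v 2 + z₄ * v 3, v 0,
        z₃ * v 0 + v 2, z₄ * v 0 + v 3] := by
  funext a
  fin_cases a <;> simp [actCo, nullRotationSwap, Fin.sum_univ_four]

theorem covector_typeIII_iff_null (v : Fin 4 → ℝ) :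
    (∃ Λ : Matrix (Fin 4) (Fin 4) ℝ, Λᵀ * etaM * Λ = etaM ∧
      actCo Λ v 0 = 0 ∧ actCo Λ v 2 = 0 ∧ actCo Λ v 3 = 0) ↔
    (∑ a, ∑ b, etaM a b * v a * v b) = 0 := by
  rw [etaM_quadratic_eq]
  constructor
  · rintro ⟨Λ, hΛ, h0, h2, h3⟩
    have hinv := etaM_quadratic_actCo hΛ v
    rw [etaM_quadratic_eq, etaM_quadratic_eq, h0, h2, h3] at hinv
    linarith
  · intro hnull
    by_cases h0 : v 0 = 0
    · have hsq : v 2 ^ 2 + v 3 ^ 2 = 0 := by rw [h0] at hnull; linarith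
      have h2 : v 2 = 0 := by nlinarith [sq_nonneg (v 3)]
      have h3 : v 3 = 0 := by nlinarith [sq_nonneg (v 2)]
      refine ⟨1, by simp, ?_, ?_, ?_⟩ <;> simp [actCo_eq_vecMul, h0, h2, h3]
    · refine ⟨nullRotationSwap (-v 2 / v 0) (-v 3 / v 0),
        nullRotationSwap_transpose_mul_etaM_mul _ _, ?_, by simp [actCo_nullRotationSwap, h0],
        by simp [actCo_nullRotationSwap, h0]⟩
      simp only [actCo_nullRotationSwap, cons_val_zero]
      field_simp
      linear_combination -hnull
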